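/- Let K = K¹ ⊔_σ K² be a wedge-decomposable simplicial complex on [m] with no ghost vertices, let ρ = V(K¹), τ = V(K²), and L = ⟨ρ⟩ ⊔_σ ⟨τ⟩. Then for each non-empty J ⊆ [m] and each n ≥ 0 the sequence H̃_n(⟨σ⟩_J) →φ H̃_n(K¹_J) ⊕ H̃_n(K²_J) →ψ H̃_n(K_J) →Φ H̃_n(L_J) → 0 is exact, where φ(z) = (z̄, −z̄) (images under the maps induced by the inclusions of ⟨σ⟩_J into K¹_J and K²_J), ψ(x, y) is the sum of the images of x and y in H̃_n(K_J), and Φ is induced by the inclusion K_J ↪ L_J. -/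

import Mathlib

set_option maxHeartbeats 1000000
set_option synthInstance.maxHeartbeats 1000000

open scoped DirectSum

namespace DH

/-- An abstract simplicial complex on the finite (totally ordered) vertex set `S ⊆ ℕ`:
a collection of subsets of `S` containing `∅` and closed under taking subsets. -/
structure SComplex (S : Finset ℕ) : Type where
  faces : Set (Finset ℕ)
  empty_mem : ∅ ∈ faces
  faces_subset : ∀ ⦃σ : Finset ℕ⦄, σ ∈ faces → σ ⊆ S
  down_closed : ∀ ⦃σ τ : Finset ℕ⦄, σ ∈ faces → τ ⊆ σ → τ ∈ faces

variable {S : Finset ℕ}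

/-- `K` has no ghost vertices: every vertex of `S` is a face. -/
def NoGhosts (K : SComplex S) : Prop := ∀ x ∈ S, ({x} : Finset ℕ) ∈ K.faces

/-- The full subcomplex `K_J = {σ ∩ J : σ ∈ K}`. -/
def SComplex.restrict (K : SComplex S) (J : Finset ℕ) : SComplex S where
  faces := {τ | ∃ σ ∈ K.faces, τ = σ ∩ J}
  empty_mem := ⟨∅, K.empty_mem, by simp⟩
  faces_subset := by
    rintro τ ⟨σ, hσ, rfl⟩
    exact Finset.inter_subset_left.trans (K.faces_subset hσ)
  down_closed := by
    rintro σ' τ ⟨σ, hσ, rfl⟩ hτ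
    refine ⟨τ, K.down_closed hσ (hτ.trans Finset.inter_subset_left), ?_⟩
    exact (Finset.inter_eq_left.mpr (hτ.trans Finset.inter_subset_right)).symm

/-- The full simplex `⟨ρ⟩` on a vertex set `ρ ⊆ S`, viewed as a complex on `S`. -/
def simplexOn (ρ : Finset ℕ) (h : ρ ⊆ S) : SComplex S where
  faces := {τ | τ ⊆ ρ}
  empty_mem := Finset.empty_subset ρ
  faces_subset := fun _ hσ => hσ.trans h
  down_closed := fun _ _ hσ hτ => hτ.trans hσ

/-- Union of two simplicial complexes on the same vertex set. -/
def SComplex.union (K1 K2 : SComplex S) : SComplex S where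
  faces := K1.faces ∪ K2.faces
  empty_mem := Or.inl K1.empty_mem
  faces_subset := by
    rintro σ (h | h)
    exacts [K1.faces_subset h, K2.faces_subset h]
  down_closed := by
    rintro σ τ (h | h) hτ
    exacts [Or.inl (K1.down_closed h hτ), Or.inr (K2.down_closed h hτ)]

/-- `K = K¹ ⊔_σ K²` : `K` is the face sum of `K¹` and `K²` along the
(possibly empty) face `σ`, which is a proper face of both. -/
structure IsFaceSum (K K1 K2 : SComplex S) (σ : Finset ℕ) : Prop where
  union : K.faces = K1.faces ∪ K2.faces
  inter : K1.faces ∩ K2.faces = {τ : Finset ℕ | τ ⊆ σ}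
  mem1 : σ ∈ K1.faces
  mem2 : σ ∈ K2.faces
  proper1 : K1.faces ≠ {τ : Finset ℕ | τ ⊆ σ}
  proper2 : K2.faces ≠ {τ : Finset ℕ | τ ⊆ σ}

/-- `K` is wedge-decomposable if it is a face sum `K¹ ⊔_σ K²`. -/
def WedgeDecomposable (K : SComplex S) : Prop :=
  ∃ K1 K2 : SComplex S, ∃ σ : Finset ℕ, IsFaceSum K K1 K2 σ

lemma IsFaceSum.le1 {K K1 K2 : SComplex S} {σ : Finset ℕ} (h : IsFaceSum K K1 K2 σ) :
    K1.faces ⊆ K.faces := h.union ▸ Set.subset_union_left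

lemma IsFaceSum.le2 {K K1 K2 : SComplex S} {σ : Finset ℕ} (h : IsFaceSum K K1 K2 σ) :
    K2.faces ⊆ K.faces := h.union ▸ Set.subset_union_right

open Classical in
/-- The effective vertex set `V(K)`: the set of non-ghost vertices. -/
noncomputable def effVerts (K : SComplex S) : Finset ℕ :=
  S.filter (fun x => ({x} : Finset ℕ) ∈ K.faces)

open Classical in
/-- The set of ghost vertices of `K`. -/
noncomputable def ghostVerts (K : SComplex S) : Finset ℕ :=
  S.filter (fun x => ({x} : Finset ℕ) ∉ K.faces)

open Classical in
lemma effVerts_subset (K : SComplex S) : effVerts K ⊆ S := Finset.filter_subset _ _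

open Classical in
lemma face_subset_effVerts (K : SComplex S) {σ : Finset ℕ} (h : σ ∈ K.faces) :
    σ ⊆ effVerts K := by
  intro x hx
  rw [effVerts, Finset.mem_filter]
  exact ⟨K.faces_subset h hx, K.down_closed h (Finset.singleton_subset_iff.mpr hx)⟩

/-- `L = ⟨V(K¹)⟩ ⊔_σ ⟨V(K²)⟩`, the face sum of the full simplices on the
effective vertex sets. -/
noncomputable def wedgeL (K1 K2 : SComplex S) : SComplex S :=
  (simplexOn (effVerts K1) (effVerts_subset K1)).union
    (simplexOn (effVerts K2) (effVerts_subset K2))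

lemma le_wedgeL {K K1 K2 : SComplex S} {σ : Finset ℕ} (h : IsFaceSum K K1 K2 σ) :
    K.faces ⊆ (wedgeL K1 K2).faces := by
  intro τ hτ
  rw [h.union] at hτ
  rcases hτ with hτ | hτ
  · exact Or.inl (face_subset_effVerts K1 hτ)
  · exact Or.inr (face_subset_effVerts K2 hτ)

/-! ### Reduced simplicial homology (augmented, ℤ coefficients) -/

/-- Faces of `K` with `k` vertices (so of dimension `k - 1`). -/
abbrev Face (K : SComplex S) (k : ℤ) : Type :=
  {σ : Finset ℕ // σ ∈ K.faces ∧ (σ.card : ℤ) = k}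

/-- The group of augmented simplicial `ℤ`-chains of `K` spanned by faces with `k`
vertices (this is the chain group in homological degree `k - 1`; for `k = 0` it is
spanned by the empty face). -/
abbrev Chains (K : SComplex S) (k : ℤ) : Type := Face K k →₀ ℤ

open Classical in
/-- The simplicial boundary map, sending a face `σ` with `j` vertices to the
alternating sum of its codimension-one subfaces (recorded in `Chains K k`;
it is the usual boundary when `k = j - 1`, and `0` otherwise). -/
noncomputable def bdry (K : SComplex S) (j k : ℤ) : Chains K j →+ Chains K k :=
  Finsupp.liftAddHom fun σ =>
    (zmultiplesHom (Chains K k)) (∑ x ∈ σ.1,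
      ((-1 : ℤ) ^ ((σ.1.filter (fun y => y < x)).card)) •
        (if h : (σ.1.erase x ∈ K.faces ∧ (((σ.1.erase x).card : ℤ)) = k) then
          Finsupp.single (⟨σ.1.erase x, h⟩ : Face K k) (1 : ℤ) else 0))

/-- The subgroup of reduced `n`-cycles. -/
noncomputable abbrev cycles (K : SComplex S) (n : ℤ) : AddSubgroup (Chains K (n + 1)) :=
  (bdry K (n + 1) n).ker

/-- The reduced `n`-boundaries, viewed inside the `n`-cycles. -/
noncomputable abbrev boundariesIn (K : SComplex S) (n : ℤ) : AddSubgroup (cycles K n) :=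
  (bdry K (n + 2) (n + 1)).range.comap (cycles K n).subtype

/-- Reduced simplicial homology `H̃_n(K; ℤ)` of the simplicial complex `K`,
computed from the augmented simplicial chain complex. -/
noncomputable abbrev RH (K : SComplex S) (n : ℤ) : Type :=
  cycles K n ⧸ boundariesIn K n

/-- The chain map induced by an inclusion of simplicial complexes. -/
noncomputable def chainMap {K1 K2 : SComplex S} (h : K1.faces ⊆ K2.faces) (k : ℤ) :
    Chains K1 k →+ Chains K2 k :=
  Finsupp.mapDomain.addMonoidHom (fun σ => (⟨σ.1, h σ.2.1, σ.2.2⟩ : Face K2 k))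

open Classical in
lemma bdry_chainMap {K1 K2 : SComplex S} (h : K1.faces ⊆ K2.faces) (j k : ℤ) (c : Chains K1 j) :
    bdry K2 j k (chainMap h j c) = chainMap h k (bdry K1 j k c) := by
  have hmap : ∀ (K1 K2 : SComplex S) (h : K1.faces ⊆ K2.faces) (k : ℤ) (a : Face K1 k) (b : ℤ),
      chainMap h k (Finsupp.single a b) =
        Finsupp.single (⟨a.1, h a.2.1, a.2.2⟩ : Face K2 k) b := by
    intro K1 K2 h k a b
    exact Finsupp.mapDomain_single
  induction c using Finsupp.induction_linear with
  | zero => simp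
  | add f g hf hg => simp only [map_add, hf, hg]
  | single σ b =>
    rw [hmap, bdry, bdry, Finsupp.liftAddHom_apply_single, Finsupp.liftAddHom_apply_single,
      zmultiplesHom_apply, zmultiplesHom_apply, map_zsmul]
    congr 1
    rw [map_sum]
    refine Finset.sum_congr rfl fun x hx => ?_
    rw [map_zsmul]
    congr 1
    by_cases hc : ((σ.1.erase x).card : ℤ) = k
    · have h1 : σ.1.erase x ∈ K1.faces ∧ ((σ.1.erase x).card : ℤ) = k :=
        ⟨K1.down_closed σ.2.1 (Finset.erase_subset _ _), hc⟩
      have h2 : σ.1.erase x ∈ K2.faces ∧ ((σ.1.erase x).card : ℤ) = k :=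
        ⟨h h1.1, hc⟩
      rw [dif_pos h1, dif_pos h2, hmap]
    · have h1 : ¬(σ.1.erase x ∈ K1.faces ∧ ((σ.1.erase x).card : ℤ) = k) := fun h' => hc h'.2
      have h2 : ¬(σ.1.erase x ∈ K2.faces ∧ ((σ.1.erase x).card : ℤ) = k) := fun h' => hc h'.2
      rw [dif_neg h1, dif_neg h2, map_zero]

/-- The map on cycles induced by an inclusion of simplicial complexes. -/
noncomputable def cycleMap {K1 K2 : SComplex S} (h : K1.faces ⊆ K2.faces) (n : ℤ) :
    cycles K1 n →+ cycles K2 n :=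
  AddMonoidHom.codRestrict ((chainMap h (n + 1)).comp (cycles K1 n).subtype)
    (cycles K2 n) (by
      rintro ⟨x, hx⟩
      rw [AddMonoidHom.mem_ker]
      have hx0 : bdry K1 (n + 1) n x = 0 := hx
      show bdry K2 (n + 1) n (chainMap h (n + 1) x) = 0
      rw [bdry_chainMap h, hx0, map_zero])

/-- The map `H̃_n(K¹) → H̃_n(K²)` induced by an inclusion `K¹ ⊆ K²` of
simplicial complexes. -/
noncomputable def inducedRH {K1 K2 : SComplex S} (h : K1.faces ⊆ K2.faces) (n : ℤ) :
    RH K1 n →+ RH K2 n :=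
  QuotientAddGroup.map _ _ (cycleMap h n) (by
    rintro z hz
    obtain ⟨c, hc⟩ := hz
    refine ⟨chainMap h (n + 2) c, ?_⟩
    show bdry K2 (n + 2) (n + 1) (chainMap h (n + 2) c) = (cycleMap h n z : Chains K2 (n + 1))
    rw [bdry_chainMap h]
    show chainMap h (n + 1) (bdry K1 (n + 2) (n + 1) c) = chainMap h (n + 1) (z : Chains K1 (n + 1))
    exact congrArg _ hc)

lemma cycleMap_comp {K1 K2 K3 : SComplex S} (h1 : K1.faces ⊆ K2.faces)
    (h2 : K2.faces ⊆ K3.faces) (n : ℤ) (z : cycles K1 n) :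
    cycleMap h2 n (cycleMap h1 n z) = cycleMap (h1.trans h2) n z := by
  apply Subtype.ext
  show Finsupp.mapDomain _ (Finsupp.mapDomain _ (z : Chains K1 (n + 1))) = Finsupp.mapDomain _ _
  rw [← Finsupp.mapDomain_comp]
  rfl

lemma inducedRH_comp {K1 K2 K3 : SComplex S} (h1 : K1.faces ⊆ K2.faces)
    (h2 : K2.faces ⊆ K3.faces) (n : ℤ) (a : RH K1 n) :
    inducedRH h2 n (inducedRH h1 n a) = inducedRH (h1.trans h2) n a := by
  induction a using QuotientAddGroup.induction_on with
  | H z =>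
    show QuotientAddGroup.mk _ = QuotientAddGroup.mk _
    rw [cycleMap_comp]

lemma restrict_mono {K1 K2 : SComplex S} (h : K1.faces ⊆ K2.faces) (J : Finset ℕ) :
    (K1.restrict J).faces ⊆ (K2.restrict J).faces := by
  rintro τ ⟨σ, hσ, rfl⟩
  exact ⟨σ, h hσ, rfl⟩

lemma restrict_le_insert (K : SComplex S) (x : ℕ) (J : Finset ℕ) :
    (K.restrict J).faces ⊆ (K.restrict (insert x J)).faces := by
  rintro τ ⟨σ, hσ, rfl⟩
  refine ⟨σ ∩ J, K.down_closed hσ Finset.inter_subset_left, ?_⟩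
  exact (Finset.inter_eq_left.mpr
    (Finset.inter_subset_right.trans (Finset.subset_insert x J))).symm

/-! ### The double homology complex `CH` and double homology `HH` -/

/-- Index type: subsets `J ⊆ S` with `|J| = l`. -/
abbrev Idx (S : Finset ℕ) (l : ℤ) : Type := {J : Finset ℕ // J ⊆ S ∧ (J.card : ℤ) = l}

/-- `CH_n^l(Z_K) = ⊕_{J ⊆ S, |J| = l} H̃_{n-1}(K_J)`. -/
noncomputable abbrev CH (K : SComplex S) (n l : ℤ) : Type :=
  ⨁ (J : Idx S l), RH (K.restrict J.1) (n - 1)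

/-- The sign `ε(x, J) = (-1)^{#{j ∈ J : j < x}}`. -/
def eps (x : ℕ) (J : Finset ℕ) : ℤ := (-1 : ℤ) ^ ((J.filter (fun y => y < x)).card)

/-- The sign `(-1)^n` for `n : ℤ`. -/
def sgn (n : ℤ) : ℤ := (((-1 : ℤˣ) ^ n : ℤˣ) : ℤ)

set_option maxHeartbeats 1000000 in
open Classical in
/-- The differential of the double homology complex: on the summand indexed by
`J` (with `|J| = l`) it is `(-1)^n Σ_{x ∈ S∖J} ε(x,J) φ_{J,x}`, where `φ_{J,x}`
is induced by the inclusion `K_J ↪ K_{J∪{x}}` (recorded in `CH K n l'`; it is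
the actual differential when `l' = l + 1`, and `0` otherwise). -/
noncomputable def dCH (K : SComplex S) (n l l' : ℤ) : CH K n l →+ CH K n l' :=
  DirectSum.toAddMonoid fun J =>
    ∑ x ∈ S \ J.1,
      (sgn n * eps x J.1) •
        (if h : (insert x J.1 ⊆ S ∧ (((insert x J.1).card : ℤ)) = l') then
          (DirectSum.of (fun J' : Idx S l' => RH (K.restrict J'.1) (n - 1))
              (⟨insert x J.1, h⟩ : Idx S l')).comp
            (inducedRH (restrict_le_insert K x J.1) (n - 1))
        else 0)

/-- The double homology `HH_n^l(Z_K)`: the `l`-th cohomology of `(CH_n^*(Z_K), d)`. -/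
noncomputable abbrev HH (K : SComplex S) (n l : ℤ) : Type :=
  (dCH K n l (l + 1)).ker ⧸
    ((dCH K n (l - 1) l).range.comap (dCH K n l (l + 1)).ker.subtype)

set_option maxHeartbeats 1000000 in
/-- The map `CH_n^l(Z_{K¹}) → CH_n^l(Z_{K²})` induced by an inclusion `K¹ ⊆ K²`. -/
noncomputable def CHmap {K1 K2 : SComplex S} (h : K1.faces ⊆ K2.faces) (n l : ℤ) :
    CH K1 n l →+ CH K2 n l :=
  DirectSum.toAddMonoid fun J =>
    (DirectSum.of (fun J' : Idx S l => RH (K2.restrict J'.1) (n - 1)) J).comp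
      (inducedRH (restrict_mono h J.1) (n - 1))

set_option maxHeartbeats 2000000 in
open Classical in
/-- Naturality of the differential `d` with respect to inclusion-induced maps. -/
lemma CHmap_dCH {K1 K2 : SComplex S} (h : K1.faces ⊆ K2.faces) (n l l' : ℤ) :
    (CHmap h n l').comp (dCH K1 n l l') = (dCH K2 n l l').comp (CHmap h n l) := by
  refine DirectSum.addHom_ext fun J a => ?_
  simp only [AddMonoidHom.comp_apply, dCH, CHmap, DirectSum.toAddMonoid_of]
  rw [AddMonoidHom.finset_sum_apply, AddMonoidHom.finset_sum_apply, map_sum]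
  refine Finset.sum_congr rfl fun x hx => ?_
  rw [AddMonoidHom.smul_apply, AddMonoidHom.smul_apply, map_zsmul]
  congr 1
  by_cases hc : insert x J.1 ⊆ S ∧ ((insert x J.1).card : ℤ) = l'
  · rw [dif_pos hc, dif_pos hc]
    rw [AddMonoidHom.comp_apply, AddMonoidHom.comp_apply, DirectSum.toAddMonoid_of,
      AddMonoidHom.comp_apply]
    congr 1
    rw [inducedRH_comp, inducedRH_comp]
  · rw [dif_neg hc, dif_neg hc]
    simp

set_option maxHeartbeats 2000000 in
/-- The map `HH_n^l(Z_{K¹}) → HH_n^l(Z_{K²})` induced by an inclusion `K¹ ⊆ K²`. -/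
noncomputable def HHmap {K1 K2 : SComplex S} (h : K1.faces ⊆ K2.faces) (n l : ℤ) :
    HH K1 n l →+ HH K2 n l :=
  QuotientAddGroup.map _ _
    (AddMonoidHom.codRestrict
      ((CHmap h n l).comp (dCH K1 n l (l + 1)).ker.subtype)
      (dCH K2 n l (l + 1)).ker (by
        rintro ⟨x, hx⟩
        rw [AddMonoidHom.mem_ker]
        have hx0 : dCH K1 n l (l + 1) x = 0 := hx
        show dCH K2 n l (l + 1) (CHmap h n l x) = 0
        have hnat := congrArg (fun f => f x) (CHmap_dCH h n l (l + 1))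
        simp only [AddMonoidHom.comp_apply] at hnat
        rw [← hnat, hx0, map_zero]))
    (by
      rintro z hz
      obtain ⟨c, hc⟩ := hz
      refine ⟨CHmap h n (l - 1) c, ?_⟩
      have hnat := congrArg (fun f => f c) (CHmap_dCH h n (l - 1) l)
      simp only [AddMonoidHom.comp_apply] at hnat
      show dCH K2 n (l - 1) l (CHmap h n (l - 1) c) = CHmap h n l ((z : CH K1 n l))
      rw [← hnat]
      exact congrArg _ hc)

/-! ### Path connectivity -/

/-- Two vertices are related if they span an edge of `K`. -/
def EdgeRel (K : SComplex S) (a b : ℕ) : Prop := ({a, b} : Finset ℕ) ∈ K.faces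

/-- Reachability by a chain of edges. -/
def Reach (K : SComplex S) : ℕ → ℕ → Prop := Relation.ReflTransGen (EdgeRel K)

/-- `K` is path-connected: any two vertices are joined by a chain of edges. -/
def IsPathConnected (K : SComplex S) : Prop :=
  ∀ a b : ℕ, ({a} : Finset ℕ) ∈ K.faces → ({b} : Finset ℕ) ∈ K.faces → Reach K a b

/-- The number of path components of `K` (equivalence classes of vertices under
the relation generated by sharing an edge). -/
noncomputable def numComponents (K : SComplex S) : ℕ :=
  Nat.card (Quot (fun a b : {x : ℕ // ({x} : Finset ℕ) ∈ K.faces} => Reach K a.1 b.1))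

/-!
Restricted to `J`, the complex `K_J` is the union of `K¹_J` and `K²_J` along the simplex
`⟨σ⟩_J`, and `L_J` is the union of the full simplices `⟨ρ⟩_J` and `⟨τ⟩_J` along the same
simplex. Exactness at `H̃_n(K¹_J) ⊕ H̃_n(K²_J)` is the Mayer–Vietoris argument on augmented
chains. A class of `K_J` that bounds in `L_J` is split along both unions; the two pieces that
cancel lie on `⟨σ⟩_J`, and moving them from one side to the other writes the class as a sum of
classes of `K¹_J` and `K²_J`. Conversely, such sums die in `L_J` because they factor through
full simplices, which are acyclic by coning off their least vertex. Finally `Φ` is onto: in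
degree `0` every vertex of `L_J` is a vertex of `K_J` (no ghosts), and in degree `n ≥ 1`
Mayer–Vietoris for `L_J`, together with the acyclicity of all three simplices, gives
`H̃_n(L_J) = 0`.
-/

lemma sum_sum_erase_eq_zero_of_antisymm {α M : Type*} [DecidableEq α] [AddCommGroup M]
    [IsAddTorsionFree M] (s : Finset α) (F : α → α → M)
    (hF : ∀ x ∈ s, ∀ y ∈ s, x ≠ y → F y x = -F x y) :
    ∑ x ∈ s, ∑ y ∈ s.erase x, F x y = 0 := by
  have hswap : ∑ x ∈ s, ∑ y ∈ s.erase x, F x y = ∑ y ∈ s, ∑ x ∈ s.erase y, F x y :=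
    Finset.sum_comm' fun x y => by simp only [Finset.mem_erase, ne_comm]; tauto
  refine self_eq_neg.mp ?_
  conv_lhs => rw [hswap]
  rw [← Finset.sum_neg_distrib]
  refine Finset.sum_congr rfl fun y hy => ?_
  rw [← Finset.sum_neg_distrib]
  refine Finset.sum_congr rfl fun x hx => ?_
  exact hF y hy x (Finset.mem_of_mem_erase hx) (Finset.ne_of_mem_erase hx).symm

open Classical in
noncomputable def faceChain (K : SComplex S) (k : ℤ) (s : Finset ℕ) : Chains K k :=
  if h : s ∈ K.faces ∧ (s.card : ℤ) = k then Finsupp.single ⟨s, h⟩ 1 else 0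

def faceSign (s : Finset ℕ) (x : ℕ) : ℤ := (-1) ^ (s.filter (· < x)).card

lemma faceChain_val (K : SComplex S) {k : ℤ} (σ : Face K k) :
    faceChain K k σ.1 = Finsupp.single σ 1 := by
  rw [faceChain, dif_pos σ.2]

lemma Chains.addHom_ext {K : SComplex S} {k : ℤ} {M : Type*} [AddCommGroup M]
    {f g : Chains K k →+ M} (h : ∀ σ : Face K k, f (faceChain K k σ.1) = g (faceChain K k σ.1)) :
    f = g :=
  Finsupp.addHom_ext' fun σ => AddMonoidHom.ext_int (by simpa [faceChain_val] using h σ)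

lemma bdry_faceChain (K : SComplex S) {j : ℤ} (k : ℤ) {s : Finset ℕ} (hs : s ∈ K.faces)
    (hc : (s.card : ℤ) = j) :
    bdry K j k (faceChain K j s) = ∑ x ∈ s, faceSign s x • faceChain K k (s.erase x) := by
  rw [faceChain_val K ⟨s, hs, hc⟩, bdry, Finsupp.liftAddHom_apply_single, zmultiplesHom_apply,
    one_smul]
  rfl

lemma faceSign_erase {s : Finset ℕ} {a b : ℕ} (ha : a ∈ s) :
    faceSign (s.erase a) b = (if a < b then -1 else 1) * faceSign s b := by
  unfold faceSign
  rw [Finset.filter_erase]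
  split_ifs with hab
  · have hmem : a ∈ s.filter (· < b) := Finset.mem_filter.mpr ⟨ha, hab⟩
    rw [← Finset.card_erase_add_one hmem, pow_succ]
    ring
  · rw [Finset.erase_eq_of_notMem (s := s.filter (· < b)) fun h => hab (Finset.mem_filter.mp h).2,
      one_mul]

lemma faceSign_insert {s : Finset ℕ} {v x : ℕ} (hv : v ∉ s) (hvx : v < x) :
    faceSign (insert v s) x = -faceSign s x := by
  unfold faceSign
  rw [Finset.filter_insert, if_pos hvx,
    Finset.card_insert_of_notMem fun h => hv (Finset.mem_filter.mp h).1, pow_succ]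
  ring

lemma faceSign_of_le {s : Finset ℕ} {x : ℕ} (hx : ∀ y ∈ s, x ≤ y) : faceSign s x = 1 := by
  unfold faceSign
  rw [Finset.filter_false_of_mem fun y hy => not_lt.mpr (hx y hy), Finset.card_empty, pow_zero]

lemma card_erase_cast {s : Finset ℕ} {x : ℕ} (hx : x ∈ s) :
    ((s.erase x).card : ℤ) = s.card - 1 := by
  rw [Finset.card_erase_of_mem hx, Nat.cast_sub (Finset.card_pos.mpr ⟨x, hx⟩), Nat.cast_one]

lemma bdry_bdry (K : SComplex S) {j k l : ℤ} (hk : k = j - 1) (hl : l = k - 1)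
    (c : Chains K j) : bdry K k l (bdry K j k c) = 0 := by
  subst hk hl
  suffices (bdry K (j - 1) (j - 1 - 1)).comp (bdry K j (j - 1)) = 0 from
    DFunLike.congr_fun this c
  refine Chains.addHom_ext fun ⟨s, hs, hcard⟩ => ?_
  rw [AddMonoidHom.comp_apply, bdry_faceChain K _ hs hcard, map_sum, AddMonoidHom.zero_apply]
  calc ∑ x ∈ s, bdry K (j - 1) (j - 1 - 1) (faceSign s x • faceChain K (j - 1) (s.erase x))
      = ∑ x ∈ s, ∑ y ∈ s.erase x, (faceSign s x * faceSign (s.erase x) y) •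
          faceChain K (j - 1 - 1) ((s.erase x).erase y) := by
        refine Finset.sum_congr rfl fun x hx => ?_
        rw [map_zsmul, bdry_faceChain K _ (K.down_closed hs (Finset.erase_subset x s))
          (by rw [card_erase_cast hx, hcard]), Finset.smul_sum]
        simp only [smul_smul]
    _ = 0 := by
        refine sum_sum_erase_eq_zero_of_antisymm s _ fun x hx y hy hxy => ?_
        rw [Finset.erase_right_comm, ← neg_smul, faceSign_erase hx, faceSign_erase hy]
        congr 1
        rcases hxy.lt_or_gt with h | h
        · rw [if_pos h, if_neg h.not_gt]; ring
        · rw [if_neg h.not_gt, if_pos h]; ring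

section Cone

variable (P : SComplex S) (v : ℕ)

noncomputable def coneMap (j k : ℤ) : Chains P j →+ Chains P k :=
  Finsupp.liftAddHom fun σ =>
    zmultiplesHom (Chains P k) (if v ∈ σ.1 then 0 else faceChain P k (insert v σ.1))

variable {P v}

lemma coneMap_faceChain {j : ℤ} (k : ℤ) {s : Finset ℕ} (hs : s ∈ P.faces)
    (hc : (s.card : ℤ) = j) :
    coneMap P v j k (faceChain P j s) = if v ∈ s then 0 else faceChain P k (insert v s) := by
  rw [faceChain_val P ⟨s, hs, hc⟩, coneMap, Finsupp.liftAddHom_apply_single, zmultiplesHom_apply,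
    one_smul]

lemma coneMap_bdry_faceChain_of_mem {j : ℤ} {s : Finset ℕ} (hs : s ∈ P.faces)
    (hc : (s.card : ℤ) = j) (hv : v ∈ s) (hmin : ∀ y ∈ s, v ≤ y) :
    coneMap P v (j - 1) j (bdry P j (j - 1) (faceChain P j s)) = faceChain P j s := by
  rw [bdry_faceChain P _ hs hc, map_sum, Finset.sum_eq_single v]
  · rw [map_zsmul, coneMap_faceChain _ (P.down_closed hs (Finset.erase_subset v s))
      (by rw [card_erase_cast hv, hc]), if_neg (Finset.notMem_erase v s),
      Finset.insert_erase hv, faceSign_of_le hmin, one_smul]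
  · intro x hx hxv
    rw [map_zsmul, coneMap_faceChain _ (P.down_closed hs (Finset.erase_subset x s))
      (by rw [card_erase_cast hx, hc]), if_pos (Finset.mem_erase.mpr ⟨Ne.symm hxv, hv⟩),
      smul_zero]
  · exact fun h => absurd hv h

lemma bdry_faceChain_insert_add_coneMap {j : ℤ} {s : Finset ℕ} (hs : insert v s ∈ P.faces)
    (hc : (s.card : ℤ) = j) (hv : v ∉ s) (hmin : ∀ y ∈ s, v < y) :
    bdry P (j + 1) j (faceChain P (j + 1) (insert v s)) +
      coneMap P v (j - 1) j (bdry P j (j - 1) (faceChain P j s)) = faceChain P j s := by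
  have hs' : s ∈ P.faces := P.down_closed hs (Finset.subset_insert v s)
  have hcone : ∀ x ∈ s, coneMap P v (j - 1) j (faceSign s x • faceChain P (j - 1) (s.erase x)) =
      faceSign s x • faceChain P j (insert v (s.erase x)) := fun x hx => by
    rw [map_zsmul, coneMap_faceChain _ (P.down_closed hs' (Finset.erase_subset x s))
      (by rw [card_erase_cast hx, hc]), if_neg fun h => hv (Finset.mem_of_mem_erase h)]
  have hface : ∀ x ∈ s, faceSign (insert v s) x • faceChain P j ((insert v s).erase x) =
      -(faceSign s x • faceChain P j (insert v (s.erase x))) := fun x hx => by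
    rw [faceSign_insert hv (hmin x hx), neg_smul,
      Finset.erase_insert_of_ne (hmin x hx).ne]
  rw [bdry_faceChain P _ hs (by rw [Finset.card_insert_of_notMem hv, Nat.cast_succ, hc]),
    Finset.sum_insert hv, Finset.sum_congr rfl hface, bdry_faceChain P _ hs' hc, map_sum,
    Finset.sum_congr rfl hcone, Finset.erase_insert hv,
    faceSign_of_le fun y hy => (Finset.mem_insert.mp hy).elim ge_of_eq fun h => (hmin y h).le,
    Finset.sum_neg_distrib, one_smul, neg_add_cancel_right]

lemma bdry_coneMap_add_coneMap_bdry {ρ : Finset ℕ} (hP : P.faces = {τ | τ ⊆ ρ}) (hv : v ∈ ρ)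
    (hmin : ∀ y ∈ ρ, v ≤ y) (j : ℤ) (c : Chains P j) :
    bdry P (j + 1) j (coneMap P v j (j + 1) c) +
      coneMap P v (j - 1) j (bdry P j (j - 1) c) = c := by
  suffices (bdry P (j + 1) j).comp (coneMap P v j (j + 1)) +
      (coneMap P v (j - 1) j).comp (bdry P j (j - 1)) = AddMonoidHom.id _ from
    DFunLike.congr_fun this c
  refine Chains.addHom_ext fun ⟨s, hs, hc⟩ => ?_
  have hsρ : s ⊆ ρ := by rw [hP] at hs; exact hs
  simp only [AddMonoidHom.add_apply, AddMonoidHom.comp_apply, AddMonoidHom.id_apply]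
  rw [coneMap_faceChain _ hs hc]
  split_ifs with hvs
  · rw [map_zero, zero_add, coneMap_bdry_faceChain_of_mem hs hc hvs fun y hy => hmin y (hsρ hy)]
  · refine bdry_faceChain_insert_add_coneMap (by rw [hP]; exact Finset.insert_subset hv hsρ) hc
      hvs fun y hy => (hmin y (hsρ hy)).lt_of_ne fun h => hvs (h ▸ hy)

end Cone

lemma exists_bdry_eq_of_simplex {P : SComplex S} {ρ : Finset ℕ} (hP : P.faces = {τ | τ ⊆ ρ})
    {j k l : ℤ} (hρ : ρ.Nonempty ∨ 1 ≤ j) (hk : k = j + 1) (hl : l = j - 1) (d : Chains P j)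
    (hd : bdry P j l d = 0) : ∃ c : Chains P k, bdry P k j c = d := by
  subst hk hl
  rcases ρ.eq_empty_or_nonempty with rfl | hne
  · have hj : 1 ≤ j := hρ.resolve_left Finset.not_nonempty_empty
    have : IsEmpty (Face P j) := ⟨fun ⟨s, hs, hc⟩ => by
      rw [hP, Set.mem_ofPred_eq, Finset.subset_empty] at hs
      rw [hs, Finset.card_empty, Nat.cast_zero] at hc
      omega⟩
    exact ⟨0, Subsingleton.elim _ _⟩
  · refine ⟨coneMap P (ρ.min' hne) j (j + 1) d, ?_⟩
    have := bdry_coneMap_add_coneMap_bdry hP (ρ.min'_mem hne) (fun y hy => ρ.min'_le y hy) j d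
    rwa [hd, map_zero, add_zero] at this

section ChainMap

variable {K1 K2 K3 : SComplex S}

lemma chainMap_comp (h1 : K1.faces ⊆ K2.faces) (h2 : K2.faces ⊆ K3.faces) (k : ℤ)
    (c : Chains K1 k) : chainMap h2 k (chainMap h1 k c) = chainMap (h1.trans h2) k c :=
  (Finsupp.mapDomain_comp ..).symm

/-- The inclusion of faces underlying `chainMap`. -/
def faceIncl (h : K1.faces ⊆ K2.faces) (k : ℤ) (σ : Face K1 k) : Face K2 k :=
  ⟨σ.1, h σ.2.1, σ.2.2⟩

lemma faceIncl_injective (h : K1.faces ⊆ K2.faces) (k : ℤ) : Function.Injective (faceIncl h k) :=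
  fun _ _ hστ => Subtype.ext (Subtype.mk_eq_mk.mp hστ)

lemma chainMap_injective (h : K1.faces ⊆ K2.faces) (k : ℤ) : Function.Injective (chainMap h k) :=
  Finsupp.mapDomain_injective (faceIncl_injective h k)

lemma chainMap_apply (h : K1.faces ⊆ K2.faces) {k : ℤ} (c : Chains K1 k) (σ : Face K1 k) :
    chainMap h k c (faceIncl h k σ) = c σ :=
  Finsupp.mapDomain_apply (faceIncl_injective h k) c σ

lemma chainMap_apply_of_notMem (h : K1.faces ⊆ K2.faces) {k : ℤ} (c : Chains K1 k)
    (τ : Face K2 k) (hτ : τ.1 ∉ K1.faces) : chainMap h k c τ = 0 :=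
  Finsupp.mapDomain_of_notMem_range c τ fun ⟨σ, hστ⟩ => hτ (hστ ▸ σ.2.1)

lemma exists_chainMap_eq (h : K1.faces ⊆ K2.faces) {k : ℤ} (c : Chains K2 k)
    (hc : ∀ τ ∈ c.support, τ.1 ∈ K1.faces) : ∃ c' : Chains K1 k, chainMap h k c' = c :=
  ⟨Finsupp.comapDomain _ c (faceIncl_injective h k).injOn,
    Finsupp.mapDomain_comapDomain _ (faceIncl_injective h k) c
      fun τ hτ => ⟨⟨τ.1, hc τ hτ, τ.2.2⟩, rfl⟩⟩

end ChainMap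

section Homology

variable {K K1 K2 : SComplex S} {n : ℤ}

lemma RH_mk_eq_zero_iff (z : cycles K n) :
    (QuotientAddGroup.mk z : RH K n) = 0 ↔
      ∃ u : Chains K (n + 2), bdry K (n + 2) (n + 1) u = z :=
  QuotientAddGroup.eq_zero_iff z

lemma RH_mk_eq_mk (z w : cycles K n) (u : Chains K (n + 2))
    (hu : bdry K (n + 2) (n + 1) u = (z : Chains K (n + 1)) - w) :
    (QuotientAddGroup.mk z : RH K n) = QuotientAddGroup.mk w := by
  rw [← sub_eq_zero, ← QuotientAddGroup.mk_sub, RH_mk_eq_zero_iff]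
  exact ⟨u, hu⟩

lemma inducedRH_mk (h : K1.faces ⊆ K2.faces) (z : cycles K1 n) :
    inducedRH h n (QuotientAddGroup.mk z) = QuotientAddGroup.mk (cycleMap h n z) :=
  rfl

lemma cycleMap_val (h : K1.faces ⊆ K2.faces) (z : cycles K1 n) :
    (cycleMap h n z : Chains K2 (n + 1)) = chainMap h (n + 1) z :=
  rfl

lemma bdry_eq_zero_of_chainMap (h : K1.faces ⊆ K2.faces) {j k : ℤ} (c : Chains K1 j)
    (hc : bdry K2 j k (chainMap h j c) = 0) : bdry K1 j k c = 0 :=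
  chainMap_injective h k (by rwa [← bdry_chainMap, map_zero])

lemma RH_eq_zero_of_simplex {P : SComplex S} {ρ : Finset ℕ} (hP : P.faces = {τ | τ ⊆ ρ})
    (hn : 0 ≤ n) (x : RH P n) : x = 0 := by
  induction x using QuotientAddGroup.induction_on with
  | H z =>
    exact (RH_mk_eq_zero_iff z).mpr (exists_bdry_eq_of_simplex hP (Or.inr (by omega)) (by ring)
      (by ring) _ z.2)

lemma inducedRH_surjective_of_faces {U L : SComplex S} (hUL : U.faces ⊆ L.faces) (n : ℤ)
    (hfaces : ∀ τ ∈ L.faces, (τ.card : ℤ) = n + 1 → τ ∈ U.faces) :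
    Function.Surjective (inducedRH hUL n) := by
  intro x
  obtain ⟨z, rfl⟩ := QuotientAddGroup.mk_surjective x
  obtain ⟨c, hc⟩ := exists_chainMap_eq hUL (z : Chains L (n + 1))
    fun τ _ => hfaces τ.1 τ.2.1 τ.2.2
  have hcyc : bdry U (n + 1) n c = 0 := bdry_eq_zero_of_chainMap hUL c (by rw [hc]; exact z.2)
  exact ⟨QuotientAddGroup.mk ⟨c, AddMonoidHom.mem_ker.mpr hcyc⟩,
    congrArg _ (Subtype.ext hc)⟩

end Homology

structure IsMayerVietoris (I A B U : SComplex S) : Prop where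
  union : U.faces = A.faces ∪ B.faces
  inter : A.faces ∩ B.faces = I.faces

namespace IsMayerVietoris

variable {I A B U : SComplex S}

lemma left_le (h : IsMayerVietoris I A B U) : A.faces ⊆ U.faces :=
  h.union ▸ Set.subset_union_left

lemma right_le (h : IsMayerVietoris I A B U) : B.faces ⊆ U.faces :=
  h.union ▸ Set.subset_union_right

lemma inter_left (h : IsMayerVietoris I A B U) : I.faces ⊆ A.faces :=
  h.inter ▸ Set.inter_subset_left

lemma inter_right (h : IsMayerVietoris I A B U) : I.faces ⊆ B.faces :=
  h.inter ▸ Set.inter_subset_right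

lemma chainMap_inter_comm (h : IsMayerVietoris I A B U) (k : ℤ) (c : Chains I k) :
    chainMap h.left_le k (chainMap h.inter_left k c) =
      chainMap h.right_le k (chainMap h.inter_right k c) := by
  rw [chainMap_comp, chainMap_comp]

lemma exists_chains_add_eq (h : IsMayerVietoris I A B U) (k : ℤ) (u : Chains U k) :
    ∃ (a : Chains A k) (b : Chains B k), chainMap h.left_le k a + chainMap h.right_le k b = u := by
  induction u using Finsupp.induction_linear with
  | zero => exact ⟨0, 0, by simp⟩
  | add u u' hu hu' =>
    obtain ⟨a, b, rfl⟩ := hu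
    obtain ⟨a', b', rfl⟩ := hu'
    exact ⟨a + a', b + b', by simp only [map_add]; abel⟩
  | single τ m =>
    rcases (h.union ▸ τ.2.1 : τ.1 ∈ A.faces ∪ B.faces) with hτ | hτ
    · exact ⟨Finsupp.single ⟨τ.1, hτ, τ.2.2⟩ m, 0, by simp [chainMap, Finsupp.mapDomain_single]⟩
    · exact ⟨0, Finsupp.single ⟨τ.1, hτ, τ.2.2⟩ m, by simp [chainMap, Finsupp.mapDomain_single]⟩

lemma exists_chains_of_add_eq_zero (h : IsMayerVietoris I A B U) (k : ℤ) (a : Chains A k)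
    (b : Chains B k) (hab : chainMap h.left_le k a + chainMap h.right_le k b = 0) :
    ∃ c : Chains I k, chainMap h.inter_left k c = a ∧ chainMap h.inter_right k c = -b := by
  have hsupp : ∀ σ ∈ a.support, σ.1 ∈ I.faces := by
    intro σ hσ
    by_contra hσI
    have hσB : σ.1 ∉ B.faces := fun hB => hσI (h.inter ▸ ⟨σ.2.1, hB⟩)
    have := DFunLike.congr_fun hab (faceIncl h.left_le k σ)
    rw [Finsupp.add_apply, chainMap_apply,
      chainMap_apply_of_notMem _ _ (faceIncl h.left_le k σ) hσB, add_zero, Finsupp.coe_zero,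
      Pi.zero_apply] at this
    exact Finsupp.mem_support_iff.mp hσ this
  obtain ⟨c, hc⟩ := exists_chainMap_eq h.inter_left a hsupp
  refine ⟨c, hc, chainMap_injective h.right_le k ?_⟩
  rw [← h.chainMap_inter_comm, hc, map_neg, ← add_eq_zero_iff_eq_neg, hab]

variable {n : ℤ}

lemma chainMap_sub_add_chainMap_add (h : IsMayerVietoris I A B U) {k : ℤ} (a : Chains A k)
    (b : Chains B k) (c : Chains I k) :
    chainMap h.left_le k (a - chainMap h.inter_left k c) +
        chainMap h.right_le k (b + chainMap h.inter_right k c) =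
      chainMap h.left_le k a + chainMap h.right_le k b := by
  rw [map_sub, map_add, h.chainMap_inter_comm]
  abel

lemma mk_mem_range_coprod (h : IsMayerVietoris I A B U) (z : cycles U n)
    (a : cycles A n) (b : cycles B n)
    (hab : chainMap h.left_le (n + 1) a + chainMap h.right_le (n + 1) b = z) :
    (QuotientAddGroup.mk z : RH U n) ∈
      ((inducedRH h.left_le n).coprod (inducedRH h.right_le n)).range := by
  refine ⟨(QuotientAddGroup.mk a, QuotientAddGroup.mk b), ?_⟩
  rw [AddMonoidHom.coprod_apply, inducedRH_mk, inducedRH_mk, ← QuotientAddGroup.mk_add]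
  exact congrArg _ (Subtype.ext hab)

lemma exact_inducedRH_prod_coprod (h : IsMayerVietoris I A B U) (n : ℤ) :
    Function.Exact ((inducedRH h.inter_left n).prod (-inducedRH h.inter_right n))
      ((inducedRH h.left_le n).coprod (inducedRH h.right_le n)) := by
  rw [AddMonoidHom.exact_iff]
  refine le_antisymm ?_ ?_
  · rintro ⟨x, y⟩ hxy
    obtain ⟨a, rfl⟩ := QuotientAddGroup.mk_surjective x
    obtain ⟨b, rfl⟩ := QuotientAddGroup.mk_surjective y
    rw [AddMonoidHom.mem_ker, AddMonoidHom.coprod_apply, inducedRH_mk, inducedRH_mk,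
      ← QuotientAddGroup.mk_add, RH_mk_eq_zero_iff] at hxy
    obtain ⟨u, hu⟩ := hxy
    obtain ⟨uA, uB, rfl⟩ := h.exists_chains_add_eq (n + 2) u
    obtain ⟨c, hcA, hcB⟩ := h.exists_chains_of_add_eq_zero (n + 1)
      ((a : Chains A (n + 1)) - bdry A (n + 2) (n + 1) uA)
      ((b : Chains B (n + 1)) - bdry B (n + 2) (n + 1) uB) (by
        rw [map_sub, map_sub, ← bdry_chainMap, ← bdry_chainMap, sub_add_sub_comm, ← map_add, hu,
          AddSubgroup.coe_add, cycleMap_val, cycleMap_val, sub_self])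
    have hc : bdry I (n + 1) n c = 0 := bdry_eq_zero_of_chainMap h.inter_left c (by
      rw [hcA, map_sub, a.2, bdry_bdry A (by ring) (by ring), sub_zero])
    refine ⟨QuotientAddGroup.mk ⟨c, AddMonoidHom.mem_ker.mpr hc⟩, ?_⟩
    rw [AddMonoidHom.prod_apply, AddMonoidHom.neg_apply, Prod.mk.injEq, inducedRH_mk,
      inducedRH_mk, ← QuotientAddGroup.mk_neg]
    constructor
    · refine RH_mk_eq_mk _ _ (-uA) ?_
      rw [map_neg, cycleMap_val, hcA]
      abel
    · refine RH_mk_eq_mk _ _ (-uB) ?_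
      rw [map_neg, NegMemClass.coe_neg, cycleMap_val, hcB]
      abel
  · rintro _ ⟨x, rfl⟩
    rw [AddMonoidHom.mem_ker, AddMonoidHom.coprod_apply, AddMonoidHom.prod_apply,
      AddMonoidHom.neg_apply, map_neg, inducedRH_comp, inducedRH_comp, add_neg_eq_zero]

lemma inducedRH_coprod_surjective (h : IsMayerVietoris I A B U)
    (hI : ∀ d : Chains I n, bdry I n (n - 1) d = 0 →
      ∃ c : Chains I (n + 1), bdry I (n + 1) n c = d) :
    Function.Surjective ((inducedRH h.left_le n).coprod (inducedRH h.right_le n)) := by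
  intro x
  obtain ⟨z, rfl⟩ := QuotientAddGroup.mk_surjective x
  obtain ⟨a, b, hab⟩ := h.exists_chains_add_eq (n + 1) z
  obtain ⟨d, hdA, hdB⟩ := h.exists_chains_of_add_eq_zero n (bdry A (n + 1) n a)
    (bdry B (n + 1) n b) (by rw [← bdry_chainMap, ← bdry_chainMap, ← map_add, hab]; exact z.2)
  obtain ⟨c, hc⟩ := hI d (bdry_eq_zero_of_chainMap h.inter_left d (by
    rw [hdA, bdry_bdry A (by ring) rfl]))
  have ha : bdry A (n + 1) n (a - chainMap h.inter_left (n + 1) c) = 0 := by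
    rw [map_sub, bdry_chainMap, hc, hdA, sub_self]
  have hb : bdry B (n + 1) n (b + chainMap h.inter_right (n + 1) c) = 0 := by
    rw [map_add, bdry_chainMap, hc, hdB, add_neg_cancel]
  exact h.mk_mem_range_coprod z ⟨_, AddMonoidHom.mem_ker.mpr ha⟩ ⟨_, AddMonoidHom.mem_ker.mpr hb⟩
    ((h.chainMap_sub_add_chainMap_add a b c).trans hab)

lemma RH_eq_zero (h : IsMayerVietoris I A B U)
    (hI : ∀ d : Chains I n, bdry I n (n - 1) d = 0 →
      ∃ c : Chains I (n + 1), bdry I (n + 1) n c = d)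
    (hA : ∀ x : RH A n, x = 0) (hB : ∀ x : RH B n, x = 0) (x : RH U n) : x = 0 := by
  obtain ⟨⟨a, b⟩, rfl⟩ := h.inducedRH_coprod_surjective hI x
  rw [AddMonoidHom.coprod_apply, hA a, hB b, map_zero, map_zero, add_zero]

lemma ker_inducedRH_le_range_coprod (h : IsMayerVietoris I A B U) {P Q L : SComplex S}
    (h' : IsMayerVietoris I P Q L) (hAP : A.faces ⊆ P.faces) (hBQ : B.faces ⊆ Q.faces)
    (hUL : U.faces ⊆ L.faces) :
    (inducedRH hUL n).ker ≤ ((inducedRH h.left_le n).coprod (inducedRH h.right_le n)).range := by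
  intro x hx
  obtain ⟨z, rfl⟩ := QuotientAddGroup.mk_surjective x
  rw [AddMonoidHom.mem_ker, inducedRH_mk, RH_mk_eq_zero_iff, cycleMap_val] at hx
  obtain ⟨u, hu⟩ := hx
  obtain ⟨zA, zB, hz⟩ := h.exists_chains_add_eq (n + 1) z
  obtain ⟨wP, wQ, rfl⟩ := h'.exists_chains_add_eq (n + 2) u
  obtain ⟨c, hcP, hcQ⟩ := h'.exists_chains_of_add_eq_zero (n + 1)
    (chainMap hAP (n + 1) zA - bdry P (n + 2) (n + 1) wP)
    (chainMap hBQ (n + 1) zB - bdry Q (n + 2) (n + 1) wQ) (by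
      rw [map_sub, map_sub, chainMap_comp, chainMap_comp, ← bdry_chainMap, ← bdry_chainMap,
        sub_add_sub_comm, ← map_add, hu, ← hz, map_add, chainMap_comp, chainMap_comp, sub_self])
  have ha : bdry A (n + 1) n (zA - chainMap h.inter_left (n + 1) c) = 0 := by
    refine bdry_eq_zero_of_chainMap hAP _ ?_
    rw [map_sub, chainMap_comp, show chainMap (h.inter_left.trans hAP) (n + 1) c =
      chainMap h'.inter_left (n + 1) c from rfl, hcP, sub_sub_cancel,
      bdry_bdry P (by ring) (by ring)]
  have hb : bdry B (n + 1) n (zB + chainMap h.inter_right (n + 1) c) = 0 := by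
    refine bdry_eq_zero_of_chainMap hBQ _ ?_
    rw [map_add, chainMap_comp, show chainMap (h.inter_right.trans hBQ) (n + 1) c =
      chainMap h'.inter_right (n + 1) c from rfl, hcQ, neg_sub, add_sub_cancel,
      bdry_bdry Q (by ring) (by ring)]
  exact h.mk_mem_range_coprod z ⟨_, AddMonoidHom.mem_ker.mpr ha⟩ ⟨_, AddMonoidHom.mem_ker.mpr hb⟩
    ((h.chainMap_sub_add_chainMap_add zA zB c).trans hz)

lemma exact_coprod_inducedRH (h : IsMayerVietoris I A B U) {P Q L : SComplex S}
    (h' : IsMayerVietoris I P Q L) (hAP : A.faces ⊆ P.faces) (hBQ : B.faces ⊆ Q.faces)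
    (hUL : U.faces ⊆ L.faces) (hP : ∀ x : RH P n, x = 0) (hQ : ∀ x : RH Q n, x = 0) :
    Function.Exact ((inducedRH h.left_le n).coprod (inducedRH h.right_le n))
      (inducedRH hUL n) := by
  rw [AddMonoidHom.exact_iff]
  refine le_antisymm (h.ker_inducedRH_le_range_coprod h' hAP hBQ hUL) ?_
  rintro _ ⟨⟨x, y⟩, rfl⟩
  rw [AddMonoidHom.mem_ker, AddMonoidHom.coprod_apply, map_add, inducedRH_comp, inducedRH_comp,
    ← inducedRH_comp hAP h'.left_le, ← inducedRH_comp hBQ h'.right_le, hP (inducedRH hAP n x),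
    hQ (inducedRH hBQ n y), map_zero, map_zero, add_zero]

end IsMayerVietoris

lemma SComplex.mem_restrict_faces {K : SComplex S} {J τ : Finset ℕ} :
    τ ∈ (K.restrict J).faces ↔ τ ∈ K.faces ∧ τ ⊆ J := by
  constructor
  · rintro ⟨σ, hσ, rfl⟩
    exact ⟨K.down_closed hσ Finset.inter_subset_left, Finset.inter_subset_right⟩
  · rintro ⟨hτ, hτJ⟩
    exact ⟨τ, hτ, (Finset.inter_eq_left.mpr hτJ).symm⟩

lemma SComplex.restrict_faces (K : SComplex S) (J : Finset ℕ) :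
    (K.restrict J).faces = K.faces ∩ {τ | τ ⊆ J} :=
  Set.ext fun _ => SComplex.mem_restrict_faces

lemma restrict_simplexOn (ρ : Finset ℕ) (h : ρ ⊆ S) (J : Finset ℕ) :
    ((simplexOn ρ h).restrict J).faces = {τ | τ ⊆ ρ ∩ J} := by
  ext τ
  rw [SComplex.mem_restrict_faces, Set.mem_ofPred_eq, Finset.subset_inter_iff]
  rfl

lemma IsMayerVietoris.restrict {I A B U : SComplex S} (h : IsMayerVietoris I A B U)
    (J : Finset ℕ) :
    IsMayerVietoris (I.restrict J) (A.restrict J) (B.restrict J) (U.restrict J) where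
  union := by simp only [SComplex.restrict_faces, h.union, Set.union_inter_distrib_right]
  inter := by
    rw [SComplex.restrict_faces, SComplex.restrict_faces, SComplex.restrict_faces, ← h.inter]
    exact (Set.inter_inter_distrib_right _ _ _).symm

lemma effVerts_inter {K K1 K2 : SComplex S} {σ : Finset ℕ} (hK : IsFaceSum K K1 K2 σ) :
    effVerts K1 ∩ effVerts K2 = σ := by
  ext x
  simp only [effVerts, Finset.mem_inter, Finset.mem_filter]
  constructor
  · rintro ⟨⟨-, h1⟩, ⟨-, h2⟩⟩
    have hx : ({x} : Finset ℕ) ∈ K1.faces ∩ K2.faces := ⟨h1, h2⟩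
    rw [hK.inter] at hx
    exact Finset.singleton_subset_iff.mp hx
  · intro hx
    have hσS : σ ⊆ S := K1.faces_subset hK.mem1
    exact ⟨⟨hσS hx, K1.down_closed hK.mem1 (Finset.singleton_subset_iff.mpr hx)⟩,
      ⟨hσS hx, K2.down_closed hK.mem2 (Finset.singleton_subset_iff.mpr hx)⟩⟩

namespace IsFaceSum

variable {K K1 K2 : SComplex S} {σ : Finset ℕ}

lemma isMayerVietoris (hK : IsFaceSum K K1 K2 σ) :
    IsMayerVietoris (simplexOn σ (K1.faces_subset hK.mem1)) K1 K2 K :=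
  ⟨hK.union, hK.inter⟩

lemma isMayerVietoris_wedgeL (hK : IsFaceSum K K1 K2 σ) :
    IsMayerVietoris (simplexOn σ (K1.faces_subset hK.mem1))
      (simplexOn (effVerts K1) (effVerts_subset K1))
      (simplexOn (effVerts K2) (effVerts_subset K2)) (wedgeL K1 K2) where
  union := rfl
  inter := by
    ext τ
    simp only [simplexOn, Set.mem_inter_iff, Set.mem_ofPred_eq, ← Finset.subset_inter_iff,
      effVerts_inter hK]

end IsFaceSum

theorem exact_sequence_of_faceSum_general (m : ℕ) (K K1 K2 : SComplex (Finset.Icc 1 m))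
    (σ : Finset ℕ) (hK : IsFaceSum K K1 K2 σ) (hng : NoGhosts K)
    (J : Finset ℕ) (hJ : J ⊆ Finset.Icc 1 m) (n : ℤ) (hn : 0 ≤ n) :
    Function.Exact
      ⇑((inducedRH (restrict_mono (fun τ hτ => K1.down_closed hK.mem1 hτ :
            (simplexOn σ (K1.faces_subset hK.mem1)).faces ⊆ K1.faces) J) n).prod
        (-(inducedRH (restrict_mono (fun τ hτ => K2.down_closed hK.mem2 hτ :
            (simplexOn σ (K1.faces_subset hK.mem1)).faces ⊆ K2.faces) J) n)))
      ⇑((inducedRH (restrict_mono hK.le1 J) n).coprod (inducedRH (restrict_mono hK.le2 J) n)) ∧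
    Function.Exact
      ⇑((inducedRH (restrict_mono hK.le1 J) n).coprod (inducedRH (restrict_mono hK.le2 J) n))
      ⇑(inducedRH (restrict_mono (le_wedgeL hK) J) n) ∧
    Function.Surjective ⇑(inducedRH (restrict_mono (le_wedgeL hK) J) n) := by
  have hMV := hK.isMayerVietoris.restrict J
  have hMVL := hK.isMayerVietoris_wedgeL.restrict J
  have hAP := restrict_mono (show K1.faces ⊆ (simplexOn _ (effVerts_subset K1)).faces from
    fun _ => face_subset_effVerts K1) J
  have hBQ := restrict_mono (show K2.faces ⊆ (simplexOn _ (effVerts_subset K2)).faces from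
    fun _ => face_subset_effVerts K2) J
  have hP := RH_eq_zero_of_simplex (restrict_simplexOn _ (effVerts_subset K1) J) hn
  have hQ := RH_eq_zero_of_simplex (restrict_simplexOn _ (effVerts_subset K2) J) hn
  refine ⟨hMV.exact_inducedRH_prod_coprod n, ?_, ?_⟩
  · exact hMV.exact_coprod_inducedRH hMVL hAP hBQ _ hP hQ
  · rcases hn.eq_or_lt with rfl | hpos
    · refine inducedRH_surjective_of_faces _ 0 fun τ hτ hcard => ?_
      obtain ⟨x, rfl⟩ := Finset.card_eq_one.mp (show τ.card = 1 by omega)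
      have hxJ : {x} ⊆ J := (SComplex.mem_restrict_faces.mp hτ).2
      exact SComplex.mem_restrict_faces.mpr ⟨hng x (hJ (Finset.singleton_subset_iff.mp hxJ)), hxJ⟩
    · refine fun y => ⟨0, ?_⟩
      rw [map_zero, hMVL.RH_eq_zero (fun d hd => exists_bdry_eq_of_simplex
        (restrict_simplexOn _ _ J) (Or.inr hpos) rfl rfl d hd) hP hQ y]

/-- For a wedge-decomposable `K = K¹ ⊔_σ K²` on `[m]` with no
ghost vertices and `L = ⟨V(K¹)⟩ ⊔_σ ⟨V(K²)⟩`, for every non-empty `J ⊆ [m]` and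
every `n ≥ 0` the sequence
`H̃_n(⟨σ⟩_J) →φ H̃_n(K¹_J) ⊕ H̃_n(K²_J) →ψ H̃_n(K_J) →Φ H̃_n(L_J) → 0`
is exact, where `φ(z) = (z̄, -z̄)`, `ψ(x,y) = x̄ + ȳ` (inclusion-induced maps), and
`Φ` is induced by the inclusion `K_J ↪ L_J`. -/
theorem exact_sequence_of_faceSum (m : ℕ) (K K1 K2 : SComplex (Finset.Icc 1 m))
    (σ : Finset ℕ) (hK : IsFaceSum K K1 K2 σ) (hng : NoGhosts K)
    (J : Finset ℕ) (hJ : J ⊆ Finset.Icc 1 m) (hJne : J.Nonempty) (n : ℤ) (hn : 0 ≤ n) :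
    Function.Exact
      ⇑((inducedRH (restrict_mono (fun τ hτ => K1.down_closed hK.mem1 hτ :
            (simplexOn σ (K1.faces_subset hK.mem1)).faces ⊆ K1.faces) J) n).prod
        (-(inducedRH (restrict_mono (fun τ hτ => K2.down_closed hK.mem2 hτ :
            (simplexOn σ (K1.faces_subset hK.mem1)).faces ⊆ K2.faces) J) n)))
      ⇑((inducedRH (restrict_mono hK.le1 J) n).coprod (inducedRH (restrict_mono hK.le2 J) n)) ∧
    Function.Exact
      ⇑((inducedRH (restrict_mono hK.le1 J) n).coprod (inducedRH (restrict_mono hK.le2 J) n))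
      ⇑(inducedRH (restrict_mono (le_wedgeL hK) J) n) ∧
    Function.Surjective ⇑(inducedRH (restrict_mono (le_wedgeL hK) J) n) :=
  exact_sequence_of_faceSum_general m K K1 K2 σ hK hng J hJ n hn

end DH
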